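/- arXiv:2307.09129 — 5 statements merged into one kernel-verified Lean document; each statement's English description precedes it below -/
import Mathlib

section
/- Let G be a finite group. The power graph P(G) is a complete graph if and only if G is a cyclic group whose order is 1 or p^r for some prime p and positive integer r. -/
/-!
`P(G)` is complete exactly when the cyclic subgroups of `G` form a chain. In that case an element
of maximal order generates the finite group `G`, and elements of distinct prime orders `p`, `q`
(Cauchy) would not be comparable, so the order has a single prime divisor. Conversely, in a
cyclic group an element lies in the cyclic subgroup generated by another as soon as its order
divides the other's, and the divisors of a prime power are totally ordered by divisibility.
-/

/-- The (undirected) power graph of a group: distinct `u`, `v` are adjacent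
iff one is an integer power of the other. -/
def powerGraph (G : Type*) [Group G] : SimpleGraph G where
  Adj u v := u ≠ v ∧ ∃ m : ℤ, u = v ^ m ∨ v = u ^ m
  symm := ⟨by
    rintro u v ⟨huv, m, hm | hm⟩
    · exact ⟨huv.symm, m, Or.inr hm⟩
    · exact ⟨huv.symm, m, Or.inl hm⟩⟩
  loopless := ⟨fun u h => h.1 rfl⟩

open Subgroup

theorem powerGraph_adj_iff {G : Type*} [Group G] {u v : G} :
    (powerGraph G).Adj u v ↔ u ≠ v ∧ (u ∈ zpowers v ∨ v ∈ zpowers u) := by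
  simp only [powerGraph, mem_zpowers_iff, exists_or, eq_comm]

theorem powerGraph_eq_top_iff {G : Type*} [Group G] :
    powerGraph G = ⊤ ↔ ∀ u v : G, u ∈ zpowers v ∨ v ∈ zpowers u := by
  refine ⟨fun h u v => ?_, fun h => ?_⟩
  · by_cases huv : u = v
    · exact Or.inl (huv ▸ mem_zpowers u)
    · exact (powerGraph_adj_iff.mp (h ▸ huv)).2
  · ext u v
    simp only [powerGraph_adj_iff, SimpleGraph.top_adj, and_iff_left_iff_imp]
    exact fun _ => h u v

theorem IsCyclic.mem_zpowers_iff_orderOf_dvd {G : Type*} [Group G] [Finite G] [IsCyclic G]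
    {u v : G} : u ∈ zpowers v ↔ orderOf u ∣ orderOf v := by
  classical
  cases nonempty_fintype G
  refine ⟨orderOf_dvd_of_mem_zpowers, fun h => ?_⟩
  let S : Finset G := {x | x ^ orderOf v = 1}
  have hsub : (zpowers v : Set G).toFinset ⊆ S := fun x hx => by
    simpa [S, ← orderOf_dvd_iff_pow_eq_one] using
      orderOf_dvd_of_mem_zpowers (Set.mem_toFinset.mp hx)
  -- A cyclic group has at most `n` solutions of `x ^ n = 1`, and `zpowers v` already has `n`.
  have hS : (zpowers v : Set G).toFinset = S := by
    have hcard : (zpowers v : Set G).toFinset.card = orderOf v := by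
      simp [Set.toFinset_card, ← Nat.card_eq_fintype_card, Nat.card_zpowers]
    exact Finset.eq_of_subset_of_card_le hsub (hcard ▸ IsCyclic.card_pow_eq_one_le (orderOf_pos v))
  have hu : u ∈ S := by simpa [S] using orderOf_dvd_iff_pow_eq_one.mp h
  simpa [← hS] using hu

section ChainOfCyclicSubgroups

variable {G : Type*} [Group G] [Finite G] (h : ∀ u v : G, u ∈ zpowers v ∨ v ∈ zpowers u)
include h

theorem isCyclic_of_forall_mem_zpowers_or_mem_zpowers : IsCyclic G := by
  obtain ⟨x, hx⟩ := Finite.exists_max (orderOf : G → ℕ)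
  refine ⟨x, fun y => mem_zpowers_iff.mp ?_⟩
  rcases h y x with hy | hxy
  · exact hy
  · have hle : zpowers x ≤ zpowers y := zpowers_le.mpr hxy
    have hcard : Nat.card (zpowers y) ≤ Nat.card (zpowers x) := by
      simpa only [Nat.card_zpowers] using hx y
    exact eq_of_le_of_card_ge hle hcard ▸ mem_zpowers y

theorem isPrimePow_card_of_forall_mem_zpowers_or_mem_zpowers (hG : Nat.card G ≠ 1) :
    IsPrimePow (Nat.card G) := by
  have prime_dvd_card_unique {p q : ℕ} (hp : p.Prime) (hq : q.Prime) (hpG : p ∣ Nat.card G)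
      (hqG : q ∣ Nat.card G) : q = p := by
    have := Fact.mk hp
    have := Fact.mk hq
    obtain ⟨a, ha⟩ := exists_prime_orderOf_dvd_card' p hpG
    obtain ⟨b, hb⟩ := exists_prime_orderOf_dvd_card' q hqG
    rcases h a b with hab | hba
    · exact ((Nat.prime_dvd_prime_iff_eq hp hq).mp (ha ▸ hb ▸ orderOf_dvd_of_mem_zpowers hab)).symm
    · exact (Nat.prime_dvd_prime_iff_eq hq hp).mp (ha ▸ hb ▸ orderOf_dvd_of_mem_zpowers hba)
  obtain ⟨p, hp, hpG⟩ := Nat.exists_prime_and_dvd hG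
  exact isPrimePow_iff_unique_prime_dvd.mpr
    ⟨p, ⟨hp, hpG⟩, fun q ⟨hq, hqG⟩ => prime_dvd_card_unique hp hq hpG hqG⟩

end ChainOfCyclicSubgroups

theorem Nat.dvd_or_dvd_of_dvd_prime_pow {p r a b : ℕ} (hp : p.Prime) (ha : a ∣ p ^ r)
    (hb : b ∣ p ^ r) : a ∣ b ∨ b ∣ a := by
  obtain ⟨i, -, rfl⟩ := (Nat.dvd_prime_pow hp).mp ha
  obtain ⟨j, -, rfl⟩ := (Nat.dvd_prime_pow hp).mp hb
  exact (le_total i j).imp (Nat.pow_dvd_pow p) (Nat.pow_dvd_pow p)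

theorem forall_mem_zpowers_or_mem_zpowers_of_card_eq_prime_pow {G : Type*} [Group G] [Finite G]
    [IsCyclic G] {p r : ℕ} (hp : p.Prime) (hG : Nat.card G = p ^ r) (u v : G) :
    u ∈ zpowers v ∨ v ∈ zpowers u := by
  simp only [IsCyclic.mem_zpowers_iff_orderOf_dvd]
  exact Nat.dvd_or_dvd_of_dvd_prime_pow hp (hG ▸ orderOf_dvd_natCard u)
    (hG ▸ orderOf_dvd_natCard v)

/-- For a finite group `G`, the power graph `P(G)` is complete iff `G` is
cyclic of order `1` or `p^r` for some prime `p` and positive integer `r`. -/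
theorem powerGraph_complete_iff (G : Type*) [Group G] [Fintype G] :
    powerGraph G = ⊤ ↔
      (IsCyclic G ∧ (Fintype.card G = 1 ∨
        ∃ p r : ℕ, p.Prime ∧ 0 < r ∧ Fintype.card G = p ^ r)) := by
  rw [powerGraph_eq_top_iff, ← Nat.card_eq_fintype_card]
  constructor
  · intro h
    refine ⟨isCyclic_of_forall_mem_zpowers_or_mem_zpowers h, or_iff_not_imp_left.mpr fun hG => ?_⟩
    obtain ⟨p, r, hp, hr, hpr⟩ :=
      (isPrimePow_nat_iff _).mp (isPrimePow_card_of_forall_mem_zpowers_or_mem_zpowers h hG)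
    exact ⟨p, r, hp, hr, hpr.symm⟩
  · rintro ⟨hcyc, hG | ⟨p, r, hp, -, hG⟩⟩
    · exact forall_mem_zpowers_or_mem_zpowers_of_card_eq_prime_pow Nat.prime_two
        (hG.trans (pow_zero 2).symm)
    · exact forall_mem_zpowers_or_mem_zpowers_of_card_eq_prime_pow hp hG
end

section
/- Let H be a graph with vertex set {1, …, k}, let G_1, …, G_k be pairwise disjoint graphs where G_i has n_i vertices and is r_i-regular, and let G̃ = ⋁_H{G_1, …, G_k} be their H-join. Fix real numbers α ≠ 0, β, γ, η and set ρ_i = Σ_{j : ij ∈ E(H)} n_j. Suppose u is a real vector on the vertices of G_i satisfying A(G_i)·u = λ·u and whose coordinates sum to 0. Then the vector X on the vertices of G̃ that equals u on the vertices of G_i and 0 on all other vertices satisfies U(G̃)·X = (αλ + β(r_i + ρ_i) + γ)·X; in particular αλ + β(r_i + ρ_i) + γ is an eigenvalue of the universal adjacency matrix U(G̃). -/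
open Matrix

/-- The `H`-join of the family of graphs `G i`: vertices of `G i` and `G j` (for `i ≠ j`)
are all joined iff `i` and `j` are adjacent in `H`; inside each part the edges are those
of `G i`. -/
def HJoin {k : ℕ} (H : SimpleGraph (Fin k)) {V : Fin k → Type*}
    (G : ∀ i, SimpleGraph (V i)) : SimpleGraph (Σ i, V i) where
  Adj u v := (∃ h : u.1 = v.1, (G v.1).Adj (h ▸ u.2) v.2) ∨ (u.1 ≠ v.1 ∧ H.Adj u.1 v.1)
  symm := by
    constructor
    rintro ⟨i, x⟩ ⟨j, y⟩ (⟨h, hadj⟩ | ⟨hne, hH⟩)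
    · dsimp at h
      subst h
      exact Or.inl ⟨rfl, hadj.symm⟩
    · exact Or.inr ⟨Ne.symm hne, hH.symm⟩
  loopless := by
    constructor
    rintro ⟨i, x⟩ (⟨h, hadj⟩ | ⟨hne, _⟩)
    · exact (G i).loopless.irrefl _ hadj
    · exact hne rfl

/-- The universal adjacency matrix `U(G) = α A + β D + γ I + η J` of a finite graph. -/
noncomputable def univAdj {V : Type*} [Fintype V] (G : SimpleGraph V)
    (α β γ η : ℝ) : Matrix V V ℝ :=
  letI := Classical.decEq V
  letI : DecidableRel G.Adj := Classical.decRel _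
  α • G.adjMatrix ℝ + β • Matrix.diagonal (fun v => (G.degree v : ℝ))
    + γ • (1 : Matrix V V ℝ) + η • Matrix.of (fun _ _ => (1 : ℝ))

/-!
Let `X` be `u` extended by zero. At a vertex of a part `j ≠ i₀`, the entry of `A X` is `0` or the
sum of the coordinates of `u` (according as `j i₀ ∈ E(H)`), so it vanishes; at a vertex of `G i₀`
it is the entry of `A(G i₀) u = λ u`. For the same reason `J X = 0`, and `D X = (r i₀ + ρ i₀) X`
because the support of `X` lies in the part `i₀`, whose vertices all have degree `r i₀ + ρ i₀` in
the join.
-/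

section HJoin

variable {k : ℕ} (H : SimpleGraph (Fin k)) {V : Fin k → Type*} (G : ∀ i, SimpleGraph (V i))

theorem hJoin_adj_mk_self {i : Fin k} {x y : V i} :
    (HJoin H G).Adj ⟨i, x⟩ ⟨i, y⟩ ↔ (G i).Adj x y := by
  simp [HJoin]

theorem hJoin_adj_mk_of_ne {i j : Fin k} (hij : i ≠ j) {x : V i} {y : V j} :
    (HJoin H G).Adj ⟨i, x⟩ ⟨j, y⟩ ↔ H.Adj i j := by
  simp [HJoin, hij]

end HJoin

def extendByZero {ι : Type*} [DecidableEq ι] {V : ι → Type*} {R : Type*} [Zero R] (i : ι)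
    (u : V i → R) : (Σ j, V j) → R :=
  fun v => if h : v.1 = i then u (h ▸ v.2) else 0

section extendByZero

variable {ι : Type*} [DecidableEq ι] {V : ι → Type*} {R : Type*}

@[simp]
theorem extendByZero_mk_self [Zero R] (i : ι) (u : V i → R) (x : V i) :
    extendByZero i u ⟨i, x⟩ = u x :=
  dif_pos rfl

theorem extendByZero_mk_of_ne [Zero R] {i j : ι} (u : V i → R) (hji : j ≠ i) (y : V j) :
    extendByZero i u ⟨j, y⟩ = 0 :=
  dif_neg hji

theorem extendByZero_smul {S : Type*} [Zero R] [SMulZeroClass S R] (i : ι) (c : S)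
    (u : V i → R) : extendByZero i (c • u) = c • extendByZero i u := by
  ext ⟨j, y⟩
  by_cases hji : j = i
  · subst hji
    simp
  · simp [extendByZero_mk_of_ne _ hji]

variable [Fintype ι] [∀ i, Fintype (V i)]

theorem sum_extendByZero [AddCommMonoid R] (i : ι) (u : V i → R) :
    ∑ v, extendByZero i u v = ∑ x, u x := by
  rw [Fintype.sum_sigma, Finset.sum_eq_single i]
  · simp
  · intro j _ hji
    simp [extendByZero_mk_of_ne _ hji]
  · simp

theorem dotProduct_extendByZero [NonUnitalNonAssocSemiring R] (f : (Σ j, V j) → R) (i : ι)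
    (u : V i → R) : f ⬝ᵥ extendByZero i u = (fun x => f ⟨i, x⟩) ⬝ᵥ u := by
  simp only [dotProduct, ← sum_extendByZero i]
  refine Fintype.sum_congr _ _ fun ⟨j, y⟩ => ?_
  by_cases hji : j = i
  · subst hji
    simp
  · simp [extendByZero_mk_of_ne _ hji]

end extendByZero

section HJoinSpectrum

variable {k : ℕ} (H : SimpleGraph (Fin k)) {V : Fin k → Type*} [∀ i, Fintype (V i)]
  (G : ∀ i, SimpleGraph (V i))

theorem hJoin_adjMatrix_mulVec_extendByZero {R : Type*} [NonAssocSemiring R]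
    [∀ i, DecidableRel (G i).Adj] [DecidableRel (HJoin H G).Adj] {i : Fin k} {u : V i → R}
    (hsum : ∑ x, u x = 0) :
    (HJoin H G).adjMatrix R *ᵥ extendByZero i u = extendByZero i ((G i).adjMatrix R *ᵥ u) := by
  ext ⟨j, x⟩
  rw [mulVec, dotProduct_extendByZero]
  by_cases hji : j = i
  · subst hji
    simp [mulVec, SimpleGraph.adjMatrix_apply, hJoin_adj_mk_self]
  · classical
    simp [SimpleGraph.adjMatrix_apply, hJoin_adj_mk_of_ne H G hji, extendByZero_mk_of_ne _ hji,
      dotProduct, hsum]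

theorem hJoin_degree_mk [DecidableRel H.Adj] [∀ i, DecidableRel (G i).Adj]
    [DecidableRel (HJoin H G).Adj] (j : Fin k) (x : V j) :
    (HJoin H G).degree ⟨j, x⟩
      = (G j).degree x + ∑ i ∈ Finset.univ.filter (H.Adj j ·), Fintype.card (V i) := by
  have hpart : ∀ i, (Finset.univ.filter fun y : V i => (HJoin H G).Adj ⟨j, x⟩ ⟨i, y⟩).card
      = (if i = j then (G j).degree x else 0) + if H.Adj j i then Fintype.card (V i) else 0 := by
    intro i
    by_cases hij : i = j
    · subst hij
      simp [hJoin_adj_mk_self, ← SimpleGraph.card_neighborFinset_eq_degree,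
        SimpleGraph.neighborFinset_eq_filter]
    · simp [hij, hJoin_adj_mk_of_ne H G (Ne.symm hij), Finset.filter_const]
      split_ifs <;> simp
  rw [← SimpleGraph.card_neighborFinset_eq_degree, SimpleGraph.neighborFinset_eq_filter,
    ← Finset.univ_sigma_univ, Finset.filter_sigma, Finset.card_sigma]
  simp only [hpart, Finset.sum_add_distrib, Finset.sum_ite_eq', Finset.mem_univ, if_true,
    Finset.sum_filter]

end HJoinSpectrum

section univAdj

variable {W : Type*} [Fintype W] (F : SimpleGraph W) (α β γ η : ℝ)

-- `univAdj` is defined with classical decidability instances; this form accepts any instances.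
theorem univAdj_eq [DecidableEq W] [DecidableRel F.Adj] :
    univAdj F α β γ η = α • F.adjMatrix ℝ + β • diagonal (fun v => (F.degree v : ℝ))
      + γ • (1 : Matrix W W ℝ) + η • of (fun _ _ => (1 : ℝ)) := by
  unfold univAdj
  congr!

theorem univAdj_mulVec_eq_smul [DecidableRel F.Adj] {μ : ℝ} {d : ℕ} {w : W → ℝ}
    (hA : F.adjMatrix ℝ *ᵥ w = μ • w) (hdeg : ∀ v, w v ≠ 0 → F.degree v = d)
    (hsum : ∑ v, w v = 0) :
    univAdj F α β γ η *ᵥ w = (α * μ + β * d + γ) • w := by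
  classical
  have hD : diagonal (fun v => (F.degree v : ℝ)) *ᵥ w = (d : ℝ) • w := by
    ext v
    by_cases hv : w v = 0
    · simp [mulVec_diagonal, hv]
    · simp [mulVec_diagonal, hdeg v hv]
  have hJ : (of fun _ _ => 1 : Matrix W W ℝ) *ᵥ w = 0 := by
    ext v
    simp [mulVec, dotProduct, hsum]
  rw [univAdj_eq, add_mulVec, add_mulVec, add_mulVec, smul_mulVec, smul_mulVec, smul_mulVec,
    smul_mulVec, hA, hD, hJ, one_mulVec]
  module

end univAdj

theorem hjoin_univAdj_eigen_of_part_general {k : ℕ} (H : SimpleGraph (Fin k))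
    [DecidableRel H.Adj] {V : Fin k → Type*} [∀ i, Fintype (V i)]
    (G : ∀ i, SimpleGraph (V i)) [∀ i, DecidableRel (G i).Adj]
    (r : Fin k → ℕ) (hreg : ∀ i, (G i).IsRegularOfDegree (r i))
    (α β γ η : ℝ) (i₀ : Fin k) (lam : ℝ) (u : V i₀ → ℝ)
    (hu : ((G i₀).adjMatrix ℝ).mulVec u = lam • u) (hsum : ∑ x, u x = 0) :
    (univAdj (HJoin H G) α β γ η).mulVec
        (fun v => if h : v.1 = i₀ then u (h ▸ v.2) else 0) =
      (α * lam
        + β * ((r i₀ : ℝ)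
          + ∑ j ∈ Finset.univ.filter (fun j => H.Adj i₀ j), (Fintype.card (V j) : ℝ))
        + γ) •
      (fun v => if h : v.1 = i₀ then u (h ▸ v.2) else 0) := by
  classical
  have hA : (HJoin H G).adjMatrix ℝ *ᵥ extendByZero i₀ u = lam • extendByZero i₀ u := by
    rw [hJoin_adjMatrix_mulVec_extendByZero H G hsum, hu, extendByZero_smul]
  have hdeg : ∀ v, extendByZero i₀ u v ≠ 0 → (HJoin H G).degree v
      = r i₀ + ∑ j ∈ Finset.univ.filter (H.Adj i₀ ·), Fintype.card (V j) := by
    rintro ⟨j, x⟩ hv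
    obtain rfl : j = i₀ := by_contra fun hj => hv (extendByZero_mk_of_ne u hj x)
    rw [hJoin_degree_mk, hreg j x]
  exact_mod_cast univAdj_mulVec_eq_smul (HJoin H G) α β γ η hA hdeg
    ((sum_extendByZero i₀ u).trans hsum)

/-- In the `H`-join of regular graphs `G i` (with `G i` being `r i`-regular on
`n i` vertices), an adjacency eigenvector `u` of `G i₀` whose coordinates sum to `0`,
extended by `0` to the other parts, is an eigenvector of the universal adjacency matrix
`U(⋁_H {G i})` for the eigenvalue `α λ + β (r i₀ + ρ i₀) + γ`,
where `ρ i = Σ_{j : ij ∈ E(H)} n j`. -/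
theorem hjoin_univAdj_eigen_of_part {k : ℕ} (H : SimpleGraph (Fin k))
    [DecidableRel H.Adj] {V : Fin k → Type*} [∀ i, Fintype (V i)]
    (G : ∀ i, SimpleGraph (V i)) [∀ i, DecidableRel (G i).Adj]
    (r : Fin k → ℕ) (hreg : ∀ i, (G i).IsRegularOfDegree (r i))
    (α β γ η : ℝ) (hα : α ≠ 0) (i₀ : Fin k) (lam : ℝ) (u : V i₀ → ℝ)
    (hu : ((G i₀).adjMatrix ℝ).mulVec u = lam • u) (hsum : ∑ x, u x = 0) :
    (univAdj (HJoin H G) α β γ η).mulVec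
        (fun v => if h : v.1 = i₀ then u (h ▸ v.2) else 0) =
      (α * lam
        + β * ((r i₀ : ℝ)
          + ∑ j ∈ Finset.univ.filter (fun j => H.Adj i₀ j), (Fintype.card (V j) : ℝ))
        + γ) •
      (fun v => if h : v.1 = i₀ then u (h ▸ v.2) else 0) :=
  hjoin_univAdj_eigen_of_part_general H G r hreg α β γ η i₀ lam u hu hsum
end

section
/- Let H be a graph with vertex set {1, …, k}, let G_1, …, G_k be pairwise disjoint graphs where G_i has n_i ≥ 1 vertices and is r_i-regular, and let G̃ = ⋁_H{G_1, …, G_k} be their H-join. Fix real numbers α ≠ 0, β, γ, η and set ρ_i = Σ_{j : ij ∈ E(H)} n_j. Define the k×k real symmetric matrix K by K_{ii} = α r_i + β(r_i + ρ_i) + γ + η n_i and, for i ≠ j, K_{ij} = θ_{ij}·√(n_i n_j), where θ_{ij} = α + η if ij ∈ E(H) and θ_{ij} = η otherwise. If ν ∈ ℝ^k satisfies K·ν = λ·ν, then the vector X on the vertices of G̃ whose value at every vertex of G_i is ν_i/√(n_i) satisfies U(G̃)·X = λ·X; in particular every eigenvalue of K is an eigenvalue of the universal adjacency matrix U(G̃).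 -/
open Matrix

/-!
The partition of the `H`-join into its parts is equitable: a vector that is constant on each
part is mapped by `U` to a vector that is again constant on each part, the values transforming
by the quotient matrix `Q`, with `Q i i = α r_i + β (r_i + ρ_i) + γ + η n_i` and
`Q i j = θ_{ij} n_j`. The symmetric matrix `K` is the conjugate `S Q S⁻¹` by
`S = diag (√n_i)`, so an eigenvector `ν` of `K` gives the eigenvector `S⁻¹ ν` of `Q`, which lifts
to `U`.
-/

open Finset

theorem Matrix.mulVec_div_eq_smul_div_of_mul_diagonal {ι F : Type*} [Fintype ι] [DecidableEq ι]
    [Field F] {A B : Matrix ι ι F} {s : ι → F} (hs : ∀ i, s i ≠ 0)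
    (hAB : A * diagonal s = diagonal s * B) {μ : F} {v : ι → F} (hv : A *ᵥ v = μ • v) :
    B *ᵥ (v / s) = μ • (v / s) := by
  have hvs : diagonal s *ᵥ (v / s) = v := by
    ext i
    simp [mulVec_diagonal, mul_div_cancel₀ _ (hs i)]
  have h : diagonal s *ᵥ (B *ᵥ (v / s)) = diagonal s *ᵥ (μ • (v / s)) := by
    rw [mulVec_mulVec, ← hAB, ← mulVec_mulVec, hvs, hv, mulVec_smul, hvs]
  ext i
  simpa [mulVec_diagonal, hs i] using congrFun h i

lemma univAdj_mulVec_apply {W : Type*} [Fintype W] (G : SimpleGraph W) [DecidableRel G.Adj]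
    (α β γ η : ℝ) (x : W → ℝ) (v : W) :
    (univAdj G α β γ η *ᵥ x) v =
      α * ∑ u ∈ G.neighborFinset v, x u + β * G.degree v * x v + γ * x v + η * ∑ u, x u := by
  classical
  -- `congr!` matches the classical instances inside `univAdj` with the given ones
  simp only [univAdj, add_mulVec, smul_mulVec, Pi.add_apply, Pi.smul_apply, smul_eq_mul,
    SimpleGraph.adjMatrix_mulVec_apply, mulVec_diagonal, one_mulVec, mul_assoc]
  congr!
  simp [mulVec, dotProduct]

namespace HJoin

variable {k : ℕ} {H : SimpleGraph (Fin k)} {V : Fin k → Type*} {G : ∀ i, SimpleGraph (V i)}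

@[simp]
lemma adj_mk_mk_self {i : Fin k} {x y : V i} :
    (HJoin H G).Adj ⟨i, x⟩ ⟨i, y⟩ ↔ (G i).Adj x y := by
  simp [HJoin]

@[simp]
lemma adj_mk_mk_of_ne {i j : Fin k} (hij : i ≠ j) {x : V i} {y : V j} :
    (HJoin H G).Adj ⟨i, x⟩ ⟨j, y⟩ ↔ H.Adj i j := by
  simp [HJoin, hij]

variable [∀ i, Fintype (V i)]

lemma sum_neighborFinset_mk {M : Type*} [AddCommMonoid M] [DecidableRel H.Adj]
    [∀ i, DecidableRel (G i).Adj] [DecidableRel (HJoin H G).Adj] (i : Fin k) (x : V i)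
    (g : (Σ i, V i) → M) :
    ∑ u ∈ (HJoin H G).neighborFinset ⟨i, x⟩, g u =
      ∑ y ∈ (G i).neighborFinset x, g ⟨i, y⟩ + ∑ j ∈ univ.filter (H.Adj i), ∑ y, g ⟨j, y⟩ := by
  have hpart : ∀ j, ∑ y : V j, (if (HJoin H G).Adj ⟨i, x⟩ ⟨j, y⟩ then g ⟨j, y⟩ else 0) =
      (if i = j then ∑ y ∈ (G i).neighborFinset x, g ⟨i, y⟩ else 0) +
        if H.Adj i j then ∑ y, g ⟨j, y⟩ else 0 := by
    intro j
    rcases eq_or_ne i j with rfl | hij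
    · simp [SimpleGraph.neighborFinset_eq_filter, sum_filter]
    · simp only [adj_mk_mk_of_ne hij, if_neg hij, zero_add]
      split_ifs <;> simp
  rw [SimpleGraph.neighborFinset_eq_filter, sum_filter, ← univ_sigma_univ, sum_sigma]
  simp only [hpart, sum_add_distrib, sum_ite_eq, mem_univ, if_true, sum_filter]

lemma degree_mk [DecidableRel H.Adj] [∀ i, DecidableRel (G i).Adj]
    [DecidableRel (HJoin H G).Adj] (i : Fin k) (x : V i) :
    (HJoin H G).degree ⟨i, x⟩ =
      (G i).degree x + ∑ j ∈ univ.filter (H.Adj i), Fintype.card (V j) := by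
  rw [← SimpleGraph.card_neighborFinset_eq_degree, ← SimpleGraph.card_neighborFinset_eq_degree,
    card_eq_sum_ones, sum_neighborFinset_mk]
  simp

/-- The quotient matrix of `univAdj (HJoin H G)` for the partition into the parts, when the part
`G i` is `r i`-regular on `n i` vertices. -/
noncomputable def quotientMatrix (H : SimpleGraph (Fin k)) [DecidableRel H.Adj]
    (r n : Fin k → ℝ) (α β γ η : ℝ) : Matrix (Fin k) (Fin k) ℝ :=
  diagonal (fun i => α * r i + β * (r i + ∑ j ∈ univ.filter (H.Adj i), n j) + γ)
    + (α • H.adjMatrix ℝ + η • of fun _ _ => 1) * diagonal n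

theorem univAdj_mulVec_comp_fst [DecidableRel H.Adj] [∀ i, DecidableRel (G i).Adj]
    {r : Fin k → ℕ} (hreg : ∀ i, (G i).IsRegularOfDegree (r i)) (α β γ η : ℝ)
    (f : Fin k → ℝ) :
    univAdj (HJoin H G) α β γ η *ᵥ (fun v => f v.1) =
      fun v =>
        (quotientMatrix H (fun i => r i) (fun i => Fintype.card (V i)) α β γ η *ᵥ f) v.1 := by
  classical
  ext ⟨i, x⟩
  rw [univAdj_mulVec_apply, sum_neighborFinset_mk, degree_mk, quotientMatrix, add_mulVec,
    ← mulVec_mulVec, add_mulVec, smul_mulVec, smul_mulVec]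
  have hconst : ∀ j, ∑ _y : V j, f j = Fintype.card (V j) * f j := by simp
  simp only [Pi.add_apply, Pi.smul_apply, smul_eq_mul, mulVec_diagonal,
    SimpleGraph.adjMatrix_mulVec_apply, SimpleGraph.neighborFinset_eq_filter (G := H),
    Fintype.sum_sigma, hconst, sum_const, SimpleGraph.card_neighborFinset_eq_degree,
    nsmul_eq_mul]
  simp only [mulVec, dotProduct, of_apply, one_mul, diagonal_apply, ite_mul, zero_mul,
    sum_ite_eq, mem_univ, if_true, Nat.cast_add, Nat.cast_sum, (hreg i).degree_eq x]
  ring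

lemma mul_diagonal_sqrt_eq_diagonal_sqrt_mul_quotientMatrix [DecidableRel H.Adj]
    {r n : Fin k → ℝ} (hn : ∀ i, 0 ≤ n i) {α β γ η : ℝ}
    {K : Matrix (Fin k) (Fin k) ℝ}
    (hK : ∀ i j, K i j =
      if i = j then α * r i + β * (r i + ∑ l ∈ univ.filter (H.Adj i), n l) + γ + η * n i
      else (if H.Adj i j then α + η else η) * Real.sqrt (n i * n j)) :
    K * diagonal (fun i => Real.sqrt (n i)) =
      diagonal (fun i => Real.sqrt (n i)) * quotientMatrix H r n α β γ η := by
  ext i j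
  rw [mul_diagonal, diagonal_mul, hK, quotientMatrix]
  rcases eq_or_ne i j with rfl | hij
  · simp only [↓reduceIte, smul_of, Matrix.add_apply, diagonal_apply_eq, mul_diagonal,
      Matrix.smul_apply, SimpleGraph.adjMatrix_apply, SimpleGraph.irrefl, smul_eq_mul, mul_zero,
      of_apply, Pi.smul_apply, mul_one, zero_add]
    ring
  · simp only [hij, ↓reduceIte, Real.sqrt_mul (hn i), ite_mul, smul_of, Matrix.add_apply,
      ne_eq, not_false_eq_true, diagonal_apply_ne, mul_diagonal, Matrix.smul_apply,
      SimpleGraph.adjMatrix_apply, smul_eq_mul, mul_ite, mul_one, mul_zero, of_apply,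
      Pi.smul_apply, zero_add]
    have hsq := Real.mul_self_sqrt (hn j)
    split_ifs
    · linear_combination (α + η) * Real.sqrt (n i) * hsq
    · linear_combination η * Real.sqrt (n i) * hsq

end HJoin

theorem hjoin_univAdj_eigen_of_quotient_general {k : ℕ} (H : SimpleGraph (Fin k))
    [DecidableRel H.Adj] {V : Fin k → Type*} [∀ i, Fintype (V i)]
    (G : ∀ i, SimpleGraph (V i)) [∀ i, DecidableRel (G i).Adj]
    (r : Fin k → ℕ) (hreg : ∀ i, (G i).IsRegularOfDegree (r i))
    (hcard : ∀ i, 1 ≤ Fintype.card (V i))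
    (α β γ η : ℝ)
    (K : Matrix (Fin k) (Fin k) ℝ)
    (hK : ∀ i j, K i j =
      if i = j then
        α * (r i : ℝ)
          + β * ((r i : ℝ)
            + ∑ l ∈ Finset.univ.filter (fun l => H.Adj i l), (Fintype.card (V l) : ℝ))
          + γ + η * (Fintype.card (V i) : ℝ)
      else
        (if H.Adj i j then α + η else η)
          * Real.sqrt ((Fintype.card (V i) : ℝ) * (Fintype.card (V j) : ℝ)))
    (lam : ℝ) (ν : Fin k → ℝ) (hν : K.mulVec ν = lam • ν) :
    (univAdj (HJoin H G) α β γ η).mulVec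
        (fun v => ν v.1 / Real.sqrt (Fintype.card (V v.1) : ℝ)) =
      lam • (fun v => ν v.1 / Real.sqrt (Fintype.card (V v.1) : ℝ)) := by
  have hsqrt_ne : ∀ i, Real.sqrt (Fintype.card (V i)) ≠ 0 := fun i =>
    (Real.sqrt_pos.2 (by exact_mod_cast hcard i)).ne'
  have hsim := HJoin.mul_diagonal_sqrt_eq_diagonal_sqrt_mul_quotientMatrix
    (r := fun i => r i) (fun i => Nat.cast_nonneg (Fintype.card (V i))) hK
  have hquot := mulVec_div_eq_smul_div_of_mul_diagonal hsqrt_ne hsim hν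
  exact (HJoin.univAdj_mulVec_comp_fst hreg α β γ η _).trans (funext fun v => congrFun hquot v.1)

/-- In the `H`-join of regular graphs `G i` (with `G i` being `r i`-regular on
`n i ≥ 1` vertices), every eigenvector `ν` of the `k × k` quotient matrix `K` (with
`K i i = α r_i + β (r_i + ρ_i) + γ + η n_i` and `K i j = θ_{ij} √(n_i n_j)` for `i ≠ j`,
where `θ_{ij} = α + η` if `ij ∈ E(H)` and `θ_{ij} = η` otherwise) gives rise to the
eigenvector of `U(⋁_H {G i})` whose value on every vertex of `G i` is `ν i / √(n i)`,
with the same eigenvalue. -/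
theorem hjoin_univAdj_eigen_of_quotient {k : ℕ} (H : SimpleGraph (Fin k))
    [DecidableRel H.Adj] {V : Fin k → Type*} [∀ i, Fintype (V i)]
    (G : ∀ i, SimpleGraph (V i)) [∀ i, DecidableRel (G i).Adj]
    (r : Fin k → ℕ) (hreg : ∀ i, (G i).IsRegularOfDegree (r i))
    (hcard : ∀ i, 1 ≤ Fintype.card (V i))
    (α β γ η : ℝ) (hα : α ≠ 0)
    (K : Matrix (Fin k) (Fin k) ℝ)
    (hK : ∀ i j, K i j =
      if i = j then
        α * (r i : ℝ)
          + β * ((r i : ℝ)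
            + ∑ l ∈ Finset.univ.filter (fun l => H.Adj i l), (Fintype.card (V l) : ℝ))
          + γ + η * (Fintype.card (V i) : ℝ)
      else
        (if H.Adj i j then α + η else η)
          * Real.sqrt ((Fintype.card (V i) : ℝ) * (Fintype.card (V j) : ℝ)))
    (lam : ℝ) (ν : Fin k → ℝ) (hν : K.mulVec ν = lam • ν) :
    (univAdj (HJoin H G) α β γ η).mulVec
        (fun v => ν v.1 / Real.sqrt (Fintype.card (V v.1) : ℝ)) =
      lam • (fun v => ν v.1 / Real.sqrt (Fintype.card (V v.1) : ℝ)) :=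
  hjoin_univAdj_eigen_of_quotient_general H G r hreg hcard α β γ η K hK lam ν hν
end

section
/- Let n be a positive integer, d a positive divisor of n, and let x, y be distinct elements of H_d = {z ∈ Z_n : gcd(z, n) = d}. Fix real numbers α ≠ 0, β, γ, η. Then the vector X ∈ ℝ^{Z_n} with X_x = 1, X_y = −1 and all other coordinates 0 satisfies U(P(Z_n))·X = Λ·X, where Λ = −α + β(φ(n/d) − 1 + Σ_{d'} φ(n/d')) + γ and the sum runs over the positive divisors d' of n with d' ≠ d such that d divides d' or d' divides d. In particular Λ is an eigenvalue of U(P(Z_n)) of multiplicity at least φ(n/d) − 1. -/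
/-
In `P(ℤ_n)` the element `u` is a multiple of `v` iff `gcd(v, n) ∣ gcd(u, n)`, so whether `z` is
adjacent to `v` depends only on `gcd(z, n)` and `gcd(v, n)`. Hence two distinct elements `x, y`
of `H_d` are closed twins: `N[x] = N[y]`. For closed twins of any graph, `e_x - e_y` is killed
by `J` and by `A + I` (whose columns `x` and `y` coincide), so it is an eigenvector of
`αA + βD + γI + ηJ` with eigenvalue `-α + β deg x + γ`. Finally `N[x]` is the union of the
classes `H_{d'}` over the divisors `d'` comparable with `d`, and `|H_{d'}| = φ(n/d')`.
-/

open Matrix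

/-- The (undirected) power graph of an additive group: distinct `u`, `v` are adjacent
iff one is an integer multiple of the other. -/
def addPowerGraph (G : Type*) [AddGroup G] : SimpleGraph G where
  Adj u v := u ≠ v ∧ ∃ m : ℤ, u = m • v ∨ v = m • u
  symm := ⟨by
    rintro u v ⟨huv, m, hm | hm⟩
    · exact ⟨huv.symm, m, Or.inr hm⟩
    · exact ⟨huv.symm, m, Or.inl hm⟩⟩
  loopless := ⟨fun u h => h.1 rfl⟩

open Finset

namespace SimpleGraph

variable {V : Type*} [Fintype V] [DecidableEq V] (G : SimpleGraph V) [DecidableRel G.Adj]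

theorem univAdj_eq (α β γ η : ℝ) :
    univAdj G α β γ η = α • G.adjMatrix ℝ + β • diagonal (fun v => (G.degree v : ℝ))
      + γ • (1 : Matrix V V ℝ) + η • of (fun _ _ => (1 : ℝ)) := by
  unfold univAdj
  congr!

variable {G} {x y : V}

theorem insert_neighborFinset_eq_of_insert_neighborSet_eq
    (h : insert x (G.neighborSet x) = insert y (G.neighborSet y)) :
    insert x (G.neighborFinset x) = insert y (G.neighborFinset y) := by
  ext z
  simpa using Set.ext_iff.1 h z

theorem degree_eq_of_insert_neighborSet_eq
    (h : insert x (G.neighborSet x) = insert y (G.neighborSet y)) :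
    G.degree x = G.degree y := by
  have := congrArg card (insert_neighborFinset_eq_of_insert_neighborSet_eq h)
  rwa [card_insert_of_notMem (G.notMem_neighborFinset_self x),
    card_insert_of_notMem (G.notMem_neighborFinset_self y), add_left_inj] at this

theorem univAdj_mulVec_single_sub_single (hne : x ≠ y)
    (h : insert x (G.neighborSet x) = insert y (G.neighborSet y)) (α β γ η : ℝ) :
    univAdj G α β γ η *ᵥ (Pi.single x 1 - Pi.single y 1) =
      (-α + β * G.degree x + γ) • (Pi.single x 1 - Pi.single y 1) := by
  have hmem : ∀ z, z = x ∨ G.Adj x z ↔ z = y ∨ G.Adj y z := fun z => by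
    simpa using Set.ext_iff.1 h z
  have hxy : G.Adj x y := ((hmem y).2 (Or.inl rfl)).resolve_left hne.symm
  have hdeg := degree_eq_of_insert_neighborSet_eq h
  ext z
  simp only [mulVec_sub, mulVec_single, MulOpposite.op_one, one_smul, Pi.sub_apply, col_apply,
    univAdj_eq, Matrix.add_apply, Matrix.smul_apply, adjMatrix_apply, diagonal_apply, one_apply,
    of_apply, smul_eq_mul, Pi.smul_apply, Pi.single_apply]
  obtain rfl | hzx := eq_or_ne z x
  · simp only [if_neg hne, hxy, G.irrefl, if_true, if_false]
    ring
  obtain rfl | hzy := eq_or_ne z y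
  · simp only [if_neg hzx, hxy.symm, G.irrefl, if_true, if_false, hdeg]
    ring
  have hzxy : G.Adj z x ↔ G.Adj z y := by simpa [hzx, hzy, G.adj_comm] using hmem z
  simp only [if_neg hzx, if_neg hzy, hzxy]
  ring

end SimpleGraph

namespace ZMod

variable {n : ℕ} [NeZero n]

theorem exists_zsmul_eq_iff_gcd_dvd_gcd (u v : ZMod n) :
    (∃ m : ℤ, u = m • v) ↔ v.val.gcd n ∣ u.val.gcd n := by
  rw [Nat.dvd_gcd_iff, and_iff_left (Nat.gcd_dvd_right _ _)]
  set g := v.val.gcd n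
  constructor
  · rintro ⟨m, rfl⟩
    have hv : (v.val : ZMod g) = 0 := (natCast_eq_zero_iff _ _).2 (Nat.gcd_dvd_left _ _)
    rw [← natCast_eq_zero_iff, natCast_val, ← castHom_apply (h := Nat.gcd_dvd_right v.val n),
      map_zsmul, castHom_apply, ← natCast_val, hv, smul_zero]
  · rintro ⟨k, hk⟩
    refine ⟨((v⁻¹ * k : ZMod n).val : ℤ), ?_⟩
    rw [zsmul_eq_mul, Int.cast_natCast, natCast_zmod_val, ← natCast_zmod_val u, hk]
    push_cast
    rw [← mul_inv_eq_gcd]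
    ring

theorem card_filter_gcd_val_eq {d : ℕ} (hd : d ∣ n) :
    #{z : ZMod n | z.val.gcd n = d} = Nat.totient (n / d) := by
  rw [Nat.totient_div_of_dvd hd]
  refine card_nbij (fun z => z.val) (fun z hz => ?_) (fun a _ b _ h => val_injective n h)
    (fun k hk => ?_)
  · simp_all [val_lt, Nat.gcd_comm]
  · simp only [coe_filter, mem_range, Set.mem_ofPred_eq] at hk
    exact ⟨k, by simp [val_cast_of_lt hk.1, Nat.gcd_comm, hk.2], val_cast_of_lt hk.1⟩

end ZMod

section addPowerGraph

variable {n : ℕ} [NeZero n]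

theorem addPowerGraph_zmod_adj_iff {u v : ZMod n} :
    (addPowerGraph (ZMod n)).Adj u v ↔
      u ≠ v ∧ (u.val.gcd n ∣ v.val.gcd n ∨ v.val.gcd n ∣ u.val.gcd n) := by
  change (u ≠ v ∧ ∃ m : ℤ, u = m • v ∨ v = m • u) ↔ _
  rw [exists_or, ZMod.exists_zsmul_eq_iff_gcd_dvd_gcd, ZMod.exists_zsmul_eq_iff_gcd_dvd_gcd,
    or_comm]

theorem addPowerGraph_zmod_insert_neighborSet (v : ZMod n) :
    insert v ((addPowerGraph (ZMod n)).neighborSet v) =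
      {z | v.val.gcd n ∣ z.val.gcd n ∨ z.val.gcd n ∣ v.val.gcd n} := by
  ext z
  rw [Set.mem_insert_iff, SimpleGraph.mem_neighborSet, addPowerGraph_zmod_adj_iff,
    Set.mem_ofPred_eq]
  obtain rfl | hzv := eq_or_ne z v
  · simp
  · simp [hzv, hzv.symm]

theorem addPowerGraph_zmod_degree_add_one (v : ZMod n)
    [Fintype ((addPowerGraph (ZMod n)).neighborSet v)] :
    (addPowerGraph (ZMod n)).degree v + 1 =
      ∑ d ∈ n.divisors with v.val.gcd n ∣ d ∨ d ∣ v.val.gcd n, Nat.totient (n / d) := by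
  classical
  set g := v.val.gcd n
  have hclosed : insert v ((addPowerGraph (ZMod n)).neighborFinset v) =
      ({z : ZMod n | g ∣ z.val.gcd n ∨ z.val.gcd n ∣ g} : Finset (ZMod n)) := by
    ext z
    simpa using Set.ext_iff.1 (addPowerGraph_zmod_insert_neighborSet v) z
  have hmaps : Set.MapsTo (fun z : ZMod n => z.val.gcd n)
      ({z : ZMod n | g ∣ z.val.gcd n ∨ z.val.gcd n ∣ g} : Finset (ZMod n))
      ({d ∈ n.divisors | g ∣ d ∨ d ∣ g} : Finset ℕ) := fun z hz => by
    simp_all [Nat.gcd_dvd_right, NeZero.ne n]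
  rw [← SimpleGraph.card_neighborFinset_eq_degree,
    ← card_insert_of_notMem (SimpleGraph.notMem_neighborFinset_self _ _), hclosed,
    card_eq_sum_card_fiberwise hmaps]
  refine sum_congr rfl fun d hd => ?_
  rw [mem_filter, Nat.mem_divisors] at hd
  rw [filter_filter, ← ZMod.card_filter_gcd_val_eq hd.1.1]
  congr 1
  ext z
  simp only [mem_filter, mem_univ, true_and, and_iff_right_iff_imp]
  rintro rfl
  exact hd.2

theorem addPowerGraph_zmod_degree (v : ZMod n)
    [Fintype ((addPowerGraph (ZMod n)).neighborSet v)] :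
    ((addPowerGraph (ZMod n)).degree v : ℝ) = Nat.totient (n / v.val.gcd n) - 1 +
      ∑ d ∈ n.divisors with d ≠ v.val.gcd n ∧ (v.val.gcd n ∣ d ∨ d ∣ v.val.gcd n),
        (Nat.totient (n / d) : ℝ) := by
  set g := v.val.gcd n
  have hg : g ∈ n.divisors.filter (fun d => g ∣ d ∨ d ∣ g) := by
    simp [g, Nat.gcd_dvd_right, NeZero.ne n]
  have hdeg := congrArg (Nat.cast : ℕ → ℝ) (addPowerGraph_zmod_degree_add_one v)
  rw [← add_sum_erase _ _ hg, ← filter_erase, ← filter_ne', filter_filter] at hdeg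
  push_cast at hdeg
  linarith

end addPowerGraph

theorem univAdj_powerGraph_zmod_eigen_general (n : ℕ) [NeZero n] (d : ℕ)
    (x y : ZMod n)
    (hx : Nat.gcd (ZMod.val x) n = d) (hy : Nat.gcd (ZMod.val y) n = d) (hxy : x ≠ y)
    (α β γ η : ℝ) :
    (univAdj (addPowerGraph (ZMod n)) α β γ η).mulVec
        (fun z => if z = x then 1 else if z = y then -1 else 0) =
      (-α
        + β * ((Nat.totient (n / d) : ℝ) - 1
          + ∑ d' ∈ (Nat.divisors n).filter (fun d' => d' ≠ d ∧ (d ∣ d' ∨ d' ∣ d)),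
              (Nat.totient (n / d') : ℝ))
        + γ) •
      ((fun z => if z = x then 1 else if z = y then -1 else 0) : ZMod n → ℝ) := by
  classical
  have hvec : (fun z => if z = x then 1 else if z = y then -1 else 0 : ZMod n → ℝ) =
      Pi.single x 1 - Pi.single y 1 := by
    ext z
    obtain rfl | hzx := eq_or_ne z x
    · simp [hxy]
    · simp only [if_neg hzx, Pi.sub_apply, Pi.single_apply, zero_sub]
      split_ifs <;> simp
  have htwin : insert x ((addPowerGraph (ZMod n)).neighborSet x) =
      insert y ((addPowerGraph (ZMod n)).neighborSet y) := by
    rw [addPowerGraph_zmod_insert_neighborSet, addPowerGraph_zmod_insert_neighborSet, hx, hy]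
  rw [hvec, SimpleGraph.univAdj_mulVec_single_sub_single hxy htwin,
    addPowerGraph_zmod_degree, hx]

/-- For a positive divisor `d` of `n` and distinct `x, y ∈ H_d`, the vector
with value `1` at `x`, `-1` at `y` and `0` elsewhere is an eigenvector of `U(P(ℤ_n))`
with eigenvalue `Λ = -α + β (φ(n/d) - 1 + Σ_{d' ∼ d} φ(n/d')) + γ`, the sum running over
positive divisors `d' ≠ d` of `n` with `d ∣ d'` or `d' ∣ d`. -/
theorem univAdj_powerGraph_zmod_eigen (n : ℕ) [NeZero n] (d : ℕ) (hd : 0 < d)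
    (hdvd : d ∣ n) (x y : ZMod n)
    (hx : Nat.gcd (ZMod.val x) n = d) (hy : Nat.gcd (ZMod.val y) n = d) (hxy : x ≠ y)
    (α β γ η : ℝ) (hα : α ≠ 0) :
    (univAdj (addPowerGraph (ZMod n)) α β γ η).mulVec
        (fun z => if z = x then 1 else if z = y then -1 else 0) =
      (-α
        + β * ((Nat.totient (n / d) : ℝ) - 1
          + ∑ d' ∈ (Nat.divisors n).filter (fun d' => d' ≠ d ∧ (d ∣ d' ∨ d' ∣ d)),
              (Nat.totient (n / d') : ℝ))
        + γ) •
      ((fun z => if z = x then 1 else if z = y then -1 else 0) : ZMod n → ℝ) :=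
  univAdj_powerGraph_zmod_eigen_general n d x y hx hy hxy α β γ η
end

section
/- Let p and q be distinct primes. Then the characteristic polynomial of the adjacency matrix of the complement of the power graph P(Z_{pq}) equals X^{pq−2}·(X² − (p − 1)(q − 1)); that is, its eigenvalues are 0 with multiplicity pq − 2, √((p − 1)(q − 1)) and −√((p − 1)(q − 1)). -/
open Matrix Polynomial

/-!
By the Chinese remainder theorem `ZMod (p * q) ≃+* ZMod p × ZMod q`, and since every residue is
the cast of an integer, `u = m • v` for some `m : ℤ` iff `v ∣ u`. In a product of two fields,
`v ∣ u` iff `u` vanishes in every coordinate where `v` does, so distinct residues are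
non-adjacent in the power graph exactly when one of them is nonzero mod `p` and zero mod `q` and
the other the other way round. The complement is thus `K_{p-1,q-1}` plus isolated vertices; its
adjacency matrix `f gᵀ + g fᵀ` (with `f`, `g` the indicators of the two parts) is a product
`A B` through `Fin 2`, and `χ(A B) = X ^ (n - 2) * χ(B A)` reduces its characteristic polynomial
to that of the `2 × 2` matrix `!![0, g ⬝ᵥ g; f ⬝ᵥ f, 0]`.
-/

open Finset

namespace Matrix

theorem vecMulVec_add_vecMulVec_eq_mul {R n : Type*} [NonUnitalNonAssocSemiring R] (f g : n → R) :
    vecMulVec f g + vecMulVec g f = (of ![f, g])ᵀ * of ![g, f] := by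
  ext i j
  simp [mul_apply, Fin.sum_univ_two, vecMulVec_apply]

theorem charpoly_vecMulVec_add_vecMulVec {R n : Type*} [CommRing R] [Nontrivial R] [Fintype n]
    [DecidableEq n] (f g : n → R) (hfg : f ⬝ᵥ g = 0) (hn : 2 ≤ Fintype.card n) :
    (vecMulVec f g + vecMulVec g f).charpoly =
      X ^ (Fintype.card n - 2) * (X ^ 2 - C ((f ⬝ᵥ f) * (g ⬝ᵥ g))) := by
  have hgf : g ⬝ᵥ f = 0 := by rwa [dotProduct_comm]
  have hswap : of ![g, f] * (of ![f, g])ᵀ = !![0, g ⬝ᵥ g; f ⬝ᵥ f, 0] := by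
    ext k l
    change ![g, f] k ⬝ᵥ ![f, g] l = _
    fin_cases k <;> fin_cases l <;> simp [hfg, hgf]
  rw [vecMulVec_add_vecMulVec_eq_mul, charpoly_mul_comm_of_le _ _ (by simpa using hn), hswap,
    charpoly_fin_two]
  simp [trace_fin_two, det_fin_two]
  ring

end Matrix

theorem Finset.dotProduct_boole_mem {V R : Type*} [Fintype V] [DecidableEq V] [NonAssocSemiring R]
    (s t : Finset V) :
    (fun v => if v ∈ s then (1 : R) else 0) ⬝ᵥ (fun v => if v ∈ t then 1 else 0) = #(s ∩ t) := by
  simp [dotProduct, Finset.sum_ite_mem, Finset.inter_comm]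

namespace SimpleGraph

variable {V R : Type*} [DecidableEq V] (G : SimpleGraph V) [DecidableRel G.Adj] (s t : Finset V)

theorem adjMatrix_eq_vecMulVec_add_vecMulVec [NonAssocSemiring R] (hst : Disjoint s t)
    (hadj : ∀ u v, G.Adj u v ↔ u ∈ s ∧ v ∈ t ∨ u ∈ t ∧ v ∈ s) :
    G.adjMatrix R = vecMulVec (fun v => if v ∈ s then 1 else 0) (fun v => if v ∈ t then 1 else 0)
      + vecMulVec (fun v => if v ∈ t then 1 else 0) (fun v => if v ∈ s then 1 else 0) := by
  ext u v
  have := Finset.disjoint_left.1 hst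
  by_cases hu : u ∈ s <;> by_cases hv : v ∈ s <;> simp_all [vecMulVec_apply, adjMatrix_apply]

theorem charpoly_adjMatrix_of_adj_iff_bipartite [Fintype V] [CommRing R] [Nontrivial R]
    (hst : Disjoint s t) (hadj : ∀ u v, G.Adj u v ↔ u ∈ s ∧ v ∈ t ∨ u ∈ t ∧ v ∈ s)
    (hV : 2 ≤ Fintype.card V) :
    (G.adjMatrix R).charpoly = X ^ (Fintype.card V - 2) * (X ^ 2 - C ((#s * #t : ℕ) : R)) := by
  have hinter : s ∩ t = ∅ := Finset.disjoint_iff_inter_eq_empty.1 hst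
  rw [G.adjMatrix_eq_vecMulVec_add_vecMulVec s t hst hadj,
    charpoly_vecMulVec_add_vecMulVec _ _ (by simp [Finset.dotProduct_boole_mem, hinter]) hV]
  simp [Finset.dotProduct_boole_mem]

end SimpleGraph

theorem ZMod.exists_zsmul_eq_iff_dvd {n : ℕ} (u v : ZMod n) : (∃ m : ℤ, u = m • v) ↔ v ∣ u := by
  constructor
  · rintro ⟨m, rfl⟩
    exact ⟨m, by rw [zsmul_eq_mul, mul_comm]⟩
  · rintro ⟨c, rfl⟩
    obtain ⟨m, rfl⟩ := ZMod.intCast_surjective c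
    exact ⟨m, by rw [zsmul_eq_mul, mul_comm]⟩

theorem compl_addPowerGraph_zmod_adj_iff {n : ℕ} (u v : ZMod n) :
    (addPowerGraph (ZMod n))ᶜ.Adj u v ↔ ¬ u ∣ v ∧ ¬ v ∣ u := by
  simp only [SimpleGraph.compl_adj, addPowerGraph, exists_or, ZMod.exists_zsmul_eq_iff_dvd]
  constructor
  · rintro ⟨hne, h⟩
    tauto
  · rintro ⟨h₁, h₂⟩
    exact ⟨fun h => h₁ (h ▸ dvd_rfl), fun ⟨_, h⟩ => h.elim h₂ h₁⟩

theorem Prod.not_dvd_and_not_dvd_iff {K L : Type*} [GroupWithZero K] [GroupWithZero L]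
    (x y : K × L) :
    ¬ x ∣ y ∧ ¬ y ∣ x ↔
      (x.1 ≠ 0 ∧ x.2 = 0) ∧ (y.1 = 0 ∧ y.2 ≠ 0) ∨ (x.1 = 0 ∧ x.2 ≠ 0) ∧ (y.1 ≠ 0 ∧ y.2 = 0) := by
  simp only [prod_dvd_iff, GroupWithZero.dvd_iff]
  tauto

/-- For distinct primes `p, q`, the characteristic polynomial of the
(real) adjacency matrix of the complement of the power graph `P(ℤ_{pq})` is
`X^{pq-2} (X² - (p-1)(q-1))`; its eigenvalues are `0` with multiplicity `pq - 2`
and `±√((p-1)(q-1))`. -/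
theorem charpoly_adj_compl_powerGraph_zmod_pq (p q : ℕ) (hp : p.Prime) (hq : q.Prime)
    (hpq : p ≠ q) :
    haveI : NeZero (p * q) := ⟨Nat.mul_ne_zero hp.ne_zero hq.ne_zero⟩
    letI : DecidableRel ((addPowerGraph (ZMod (p * q)))ᶜ.Adj) := Classical.decRel _
    Matrix.charpoly (((addPowerGraph (ZMod (p * q)))ᶜ).adjMatrix ℝ) =
      X ^ (p * q - 2) * (X ^ 2 - C (((p : ℝ) - 1) * ((q : ℝ) - 1))) := by
  let : DecidableRel ((addPowerGraph (ZMod (p * q)))ᶜ.Adj) := Classical.decRel _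
  have := Fact.mk hp
  have := Fact.mk hq
  let e := ZMod.chineseRemainder ((Nat.coprime_primes hp hq).2 hpq)
  let s := ((univ.erase 0) ×ˢ {0} : Finset (ZMod p × ZMod q)).map e.toEquiv.symm.toEmbedding
  let t := ({0} ×ˢ univ.erase 0 : Finset (ZMod p × ZMod q)).map e.toEquiv.symm.toEmbedding
  have hadj (u v : ZMod (p * q)) :
      (addPowerGraph (ZMod (p * q)))ᶜ.Adj u v ↔ u ∈ s ∧ v ∈ t ∨ u ∈ t ∧ v ∈ s := by
    rw [compl_addPowerGraph_zmod_adj_iff, ← map_dvd_iff e, ← map_dvd_iff e,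
      Prod.not_dvd_and_not_dvd_iff]
    simp only [s, t, Finset.mem_map_equiv, Equiv.symm_symm, mem_product, mem_erase,
      mem_univ, mem_singleton, and_true]
    exact Iff.rfl
  have hst : Disjoint s t := by
    rw [Finset.disjoint_map, Finset.disjoint_product]
    simp
  have hcard : 2 ≤ Fintype.card (ZMod (p * q)) := by
    rw [ZMod.card]
    nlinarith [hp.two_le, hq.two_le]
  rw [SimpleGraph.charpoly_adjMatrix_of_adj_iff_bipartite _ s t hst hadj hcard]
  simp [s, t, ZMod.card, Nat.cast_sub hp.one_le, Nat.cast_sub hq.one_le]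
end
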